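/- arXiv:2105.02842 — 6 statements merged into one kernel-verified Lean document; each statement's English description precedes it below -/
import Mathlib

section
/- Horizontal FPC composition/decomposition: in a category, given two commutative squares pasted horizontally, if the right square is a final pullback complement (of its top-right and right edges), then the composite rectangle is an FPC if and only if the left square is an FPC. -/
open CategoryTheory Limits

/-- `(n, g)` is a final pullback complement of `(f, m)`. -/
def IsFPC {C : Type*} [Category C] {A B X F : C}
    (f : A ⟶ B) (m : B ⟶ X) (n : A ⟶ F) (g : F ⟶ X) : Prop :=
  IsPullback f n m g ∧
  ∀ {D E : C} (b : D ⟶ B) (d : D ⟶ E) (e : E ⟶ X), IsPullback b d m e →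
    ∀ a : D ⟶ A, a ≫ f = b →
      ∃! h : E ⟶ F, h ≫ g = e ∧ d ≫ h = a ≫ n

namespace IsFPC

variable {C : Type*} [Category C] {A B X A' B' X' : C}
  {f : A ⟶ B} {g : B ⟶ X} {f' : A' ⟶ B'} {g' : B' ⟶ X'}
  {a : A ⟶ A'} {b : B ⟶ B'} {x : X ⟶ X'}

/-- A pullback over the right edge is first completed by the right FPC; the left square of the
result is then a pullback by the pasting lemma, so the left FPC completes it further. -/
theorem paste_horiz (hl : IsFPC f b a f') (hr : IsFPC g x b g') :
    IsFPC (f ≫ g) x a (f' ≫ g') := by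
  refine ⟨hl.1.paste_horiz hr.1, fun {D E} b₀ d e hpb a₀ ha₀ => ?_⟩
  obtain ⟨k, ⟨hkg, hkd⟩, hk_uniq⟩ :=
    hr.2 b₀ d e hpb (a₀ ≫ f) (by rw [Category.assoc, ha₀])
  have hpb_left : IsPullback (a₀ ≫ f) d b k :=
    IsPullback.of_right (by rwa [Category.assoc, ha₀, hkg]) hkd.symm hr.1
  obtain ⟨h, ⟨hf, hd⟩, h_uniq⟩ := hl.2 (a₀ ≫ f) d k hpb_left a₀ rfl
  refine ⟨h, ⟨by rw [← Category.assoc, hf, hkg], hd⟩, fun h' ⟨h'g, h'd⟩ => ?_⟩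
  have h'f : h' ≫ f' = k :=
    hk_uniq _ ⟨by rw [Category.assoc, h'g], by rw [reassoc_of% h'd, ← hl.1.w, Category.assoc]⟩
  exact h_uniq h' ⟨h'f, h'd⟩

/-- The factorisation `h` through the outer FPC satisfies `h ≫ f' = e`, since both `h ≫ f'` and
`e` are the factorisation of the pasted square through the right FPC. -/
theorem of_paste_horiz (hleft : f ≫ b = a ≫ f') (hr : IsFPC g x b g')
    (ho : IsFPC (f ≫ g) x a (f' ≫ g')) : IsFPC f b a f' := by
  refine ⟨IsPullback.of_right ho.1 hleft hr.1, fun {D E} b₀ d e hpb a₀ ha₀ => ?_⟩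
  have hpb_outer : IsPullback (b₀ ≫ g) d x (e ≫ g') := hpb.paste_horiz hr.1
  obtain ⟨h, ⟨hg, hd⟩, h_uniq⟩ :=
    ho.2 (b₀ ≫ g) d (e ≫ g') hpb_outer a₀ (by rw [← Category.assoc, ha₀])
  have hf : h ≫ f' = e :=
    (hr.2 (b₀ ≫ g) d (e ≫ g') hpb_outer b₀ rfl).unique
      ⟨by rw [Category.assoc, hg], by rw [reassoc_of% hd, ← hleft, reassoc_of% ha₀]⟩
      ⟨rfl, hpb.w.symm⟩
  exact ⟨h, ⟨hf, hd⟩, fun h' ⟨h'f, h'd⟩ => h_uniq h' ⟨by rw [← Category.assoc, h'f], h'd⟩⟩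

end IsFPC

theorem stmt_8_general {C : Type*} [Category C]
    {A B X A' B' X' : C}
    (f : A ⟶ B) (g : B ⟶ X) (f' : A' ⟶ B') (g' : B' ⟶ X')
    (a : A ⟶ A') (b : B ⟶ B') (x : X ⟶ X')
    (hleft : f ≫ b = a ≫ f')
    (hfpc : IsFPC g x b g') :
    IsFPC (f ≫ g) x a (f' ≫ g') ↔ IsFPC f b a f' :=
  ⟨IsFPC.of_paste_horiz hleft hfpc, fun hl => hl.paste_horiz hfpc⟩

/-- Horizontal FPC composition/decomposition: for two commutative squares pasted
horizontally along a common vertical edge, if the right square is an FPC then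
the outer rectangle is an FPC iff the left square is an FPC. -/
theorem stmt_8 {C : Type*} [Category C]
    {A B X A' B' X' : C}
    (f : A ⟶ B) (g : B ⟶ X) (f' : A' ⟶ B') (g' : B' ⟶ X')
    (a : A ⟶ A') (b : B ⟶ B') (x : X ⟶ X')
    (hleft : f ≫ b = a ≫ f') (hright : g ≫ x = b ≫ g')
    (hfpc : IsFPC g x b g') :
    IsFPC (f ≫ g) x a (f' ≫ g') ↔ IsFPC f b a f' :=
  stmt_8_general f g f' g' a b x hleft hfpc
end

section
/- Pullback-pushout decomposition: in an M-adhesive category, given two commutative squares pasted horizontally where the outer rectangle is a pullback, the left square is a pushout along an M-morphism that is stable under pullback, and the rightmost vertical morphism χ is in M, then both the left and right squares are pullbacks. -/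
/-!
Let `w : B ⟶ P` be the comparison map from `B` into the pullback `P` of `g'` along `χ`. By
pullback pasting, the square `(f ≫ w, a, π₁, f')` is a pullback, and `π₁ : P ⟶ B'` is mono
because `χ` is. Pulling the left square back along `π₁` therefore yields a cube with pullback
sides whose top face is `(f, 𝟙 A, w, f ≫ w)`; by stability it is a pushout, so `w`, a pushout of
an identity, is an isomorphism. Both squares are then pullbacks, being `P`'s pullback squares up
to the isomorphism `w`.
-/

open CategoryTheory Limits

/-- A pushout square that is stable under pullback: every commutative cube over
it whose vertical faces are pullbacks has a pushout as its top face. -/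
def IsStablePushout {C : Type*} [Category C] {A B X D : C}
    (f : A ⟶ B) (g : A ⟶ X) (h : B ⟶ D) (k : X ⟶ D) : Prop :=
  IsPushout f g h k ∧
  ∀ {A' B' X' D' : C} (f' : A' ⟶ B') (g' : A' ⟶ X') (h' : B' ⟶ D') (k' : X' ⟶ D')
    (α : A' ⟶ A) (β : B' ⟶ B) (γ : X' ⟶ X) (δ : D' ⟶ D),
    IsPullback f' α β f → IsPullback g' α γ g →
    IsPullback h' β δ h → IsPullback k' γ δ k →
    IsPushout f' g' h' k'

lemma CategoryTheory.IsPullback.id_snd_of_mono {C : Type*} [Category C] {B P B' : C}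
    (w : B ⟶ P) (p : P ⟶ B') [Mono p] : IsPullback w (𝟙 B) p (w ≫ p) := by
  simpa using (IsPullback.of_vert_isIso ⟨by simp⟩ : IsPullback w (𝟙 B) (𝟙 P) w).paste_horiz
    (IsKernelPair.id_of_mono p)

lemma IsStablePushout.isIso_of_isPullback {C : Type*} [Category C] {A B A' B' P : C}
    {f : A ⟶ B} {a : A ⟶ A'} {b : B ⟶ B'} {f' : A' ⟶ B'} (hpo : IsStablePushout f a b f')
    [Mono a] (w : B ⟶ P) (p : P ⟶ B') [Mono p] (hw : w ≫ p = b)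
    (hsq : IsPullback (f ≫ w) a p f') : IsIso w := by
  have htop : IsPushout f (𝟙 A) w (f ≫ w) :=
    hpo.2 f (𝟙 A) w (f ≫ w) (𝟙 A) (𝟙 B) a p (IsPullback.of_vert_isIso ⟨by simp⟩)
      (IsKernelPair.id_of_mono a) (hw ▸ IsPullback.id_snd_of_mono w p) hsq
  exact htop.isIso_inl_of_isIso

theorem stmt_12_general {C : Type*} [Category C]
    (M : MorphismProperty C)
    (hM_mono : ∀ {X Y : C} (f : X ⟶ Y), M f → Mono f)
    [HasPullbacks C]
    {A B X A' B' X' : C}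
    (f : A ⟶ B) (g : B ⟶ X) (f' : A' ⟶ B') (g' : B' ⟶ X')
    (a : A ⟶ A') (b : B ⟶ B') (χ : X ⟶ X')
    (hleft : f ≫ b = a ≫ f') (hright : g ≫ χ = b ≫ g')
    (houter : IsPullback (f ≫ g) a χ (f' ≫ g'))
    (hpo : IsStablePushout f a b f') (ha : M a) (hχ : M χ) :
    IsPullback f a b f' ∧ IsPullback g b χ g' := by
  have : Mono a := hM_mono a ha
  have : Mono χ := hM_mono χ hχ
  have hP : IsPullback (pullback.snd g' χ) (pullback.fst g' χ) χ g' :=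
    (IsPullback.of_hasPullback g' χ).flip
  let w : B ⟶ pullback g' χ := pullback.lift b g hright.symm
  have hwb : w ≫ pullback.fst g' χ = b := pullback.lift_fst _ _ _
  have hwg : w ≫ pullback.snd g' χ = g := pullback.lift_snd _ _ _
  have hsq : IsPullback (f ≫ w) a (pullback.fst g' χ) f' :=
    IsPullback.of_right (by simpa [hwg] using houter) (by simp [hwb, hleft]) hP
  have : IsIso w := hpo.isIso_of_isPullback w _ hwb hsq
  have hiso : IsPullback w b (pullback.fst g' χ) (𝟙 B') :=
    IsPullback.of_horiz_isIso ⟨by simp [hwb]⟩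
  exact ⟨(by simpa using hsq : IsPullback (f ≫ w) a _ (f' ≫ 𝟙 B')).of_right hleft hiso,
    by simpa [hwg] using hiso.paste_horiz hP⟩

/-- Pullback-pushout decomposition in an M-adhesive category: if the outer
rectangle of two horizontally pasted squares is a pullback, the left square is
a pullback-stable pushout along an M-morphism, and the right vertical morphism
`χ` is in `M`, then both squares are pullbacks. -/
theorem stmt_12 {C : Type*} [Category C]
    (M : MorphismProperty C)
    (hM_mono : ∀ {X Y : C} (f : X ⟶ Y), M f → Mono f)
    (hM_iso : ∀ {X Y : C} (f : X ⟶ Y), IsIso f → M f)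
    (hM_comp : ∀ {X Y Z : C} (f : X ⟶ Y) (g : Y ⟶ Z), M f → M g → M (f ≫ g))
    (hM_pb : ∀ {P X Y Z : C} (fst : P ⟶ X) (snd : P ⟶ Y) (h : X ⟶ Z) (k : Y ⟶ Z),
      IsPullback fst snd h k → M k → M fst)
    (hM_po : ∀ {A B X D : C} (f : A ⟶ B) (g : A ⟶ X) (h : B ⟶ D) (k : X ⟶ D),
      IsPushout f g h k → M g → M h)
    (hM_po_pb : ∀ {A B X D : C} (f : A ⟶ B) (g : A ⟶ X) (h : B ⟶ D) (k : X ⟶ D),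
      IsPushout f g h k → M g → IsPullback f g h k)
    (hM_po_stable : ∀ {A B X D : C} (f : A ⟶ B) (g : A ⟶ X) (h : B ⟶ D) (k : X ⟶ D),
      IsPushout f g h k → M g → IsStablePushout f g h k)
    [HasPullbacks C]
    {A B X A' B' X' : C}
    (f : A ⟶ B) (g : B ⟶ X) (f' : A' ⟶ B') (g' : B' ⟶ X')
    (a : A ⟶ A') (b : B ⟶ B') (χ : X ⟶ X')
    (hleft : f ≫ b = a ≫ f') (hright : g ≫ χ = b ≫ g')
    (houter : IsPullback (f ≫ g) a χ (f' ≫ g'))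
    (hpo : IsStablePushout f a b f') (ha : M a) (hχ : M χ) :
    IsPullback f a b f' ∧ IsPullback g b χ g' :=
  stmt_12_general M hM_mono f g f' g' a b χ hleft hright houter hpo ha hχ
end

section
/- In the category SGraph of directed simple graphs, a monomorphism (f_V, f_E) : (V,E,ι) → (V',E',ι') is a regular monomorphism if and only if it is edge-reflecting, i.e., the square (ι, f_E ; f_V × f_V, ι') is a pullback in Set. -/
/-!
A morphism of simple graphs is determined by its vertex map. If `f` equalizes `g` and `h`, an
edge `e'` of `H` between `f u` and `f v` is a map from the one-edge graph on which `g` and `h`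
agree, and its lift through `f` is an edge of `G` from `u` to `v` over `e'`. Conversely, label
the vertices of `H` by propositions in two ways: constantly `True`, and by "lies in the image
of `f`". A map into `H` equalizes the two labellings exactly when its vertices land in the
image of `f`, and edge reflection lets such a map lift through `f`.
-/

open CategoryTheory Limits

/-- A directed simple graph: a set of vertices, a set of edges, and an
injective incidence map `ι : E → V × V`. -/
structure SGraph : Type 1 where
  V : Type
  E : Type
  ι : E → V × V
  inj : Function.Injective ι

/-- A morphism of directed simple graphs: a pair of functions commuting with
the incidence maps. -/
@[ext]
structure SGraphHom (G H : SGraph) where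
  fV : G.V → H.V
  fE : G.E → H.E
  comm : ∀ e, H.ι (fE e) = (fV (G.ι e).1, fV (G.ι e).2)

instance : Category SGraph where
  Hom := SGraphHom
  id G := ⟨id, id, fun e => rfl⟩
  comp f g := ⟨g.fV ∘ f.fV, g.fE ∘ f.fE, fun e => by
    simp [Function.comp, g.comm, f.comm]⟩
  id_comp f := SGraphHom.ext rfl rfl
  comp_id f := SGraphHom.ext rfl rfl
  assoc f g h := SGraphHom.ext rfl rfl

@[simp] lemma SGraph_comp_fV {G H K : SGraph} (f : G ⟶ H) (g : H ⟶ K) :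
    (f ≫ g).fV = g.fV ∘ f.fV := rfl

@[simp] lemma SGraph_comp_fE {G H K : SGraph} (f : G ⟶ H) (g : H ⟶ K) :
    (f ≫ g).fE = g.fE ∘ f.fE := rfl

namespace SGraph

variable {G H K : SGraph}

lemma hom_ext_of_fV {g h : G ⟶ H} (hV : g.fV = h.fV) : g = h := by
  refine SGraphHom.ext hV (funext fun e => H.inj ?_)
  rw [g.comm, h.comm, hV]

def vertex : SGraph := ⟨Unit, Empty, Empty.elim, fun a => a.elim⟩

def vertexHom (x : G.V) : vertex ⟶ G := ⟨fun _ => x, Empty.elim, fun e => e.elim⟩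

lemma injective_fV_of_mono (f : G ⟶ H) [Mono f] : Function.Injective f.fV := by
  intro x y hxy
  have h : vertexHom x ≫ f = vertexHom y ≫ f := hom_ext_of_fV (funext fun _ => hxy)
  exact congrFun (congrArg SGraphHom.fV ((cancel_mono f).mp h)) ()

def edge : SGraph := ⟨Bool, Unit, fun _ => (true, false), fun _ _ _ => rfl⟩

def edgeHom (e : G.E) : edge ⟶ G :=
  ⟨fun b => bif b then (G.ι e).1 else (G.ι e).2, fun _ => e, fun _ => rfl⟩

def EdgeReflecting (f : G ⟶ H) : Prop :=
  ∀ (e' : H.E) (u v : G.V), H.ι e' = (f.fV u, f.fV v) →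
    ∃ e : G.E, f.fE e = e' ∧ G.ι e = (u, v)

lemma edgeReflecting_of_regularMono {f : G ⟶ H} (r : RegularMono f) : EdgeReflecting f := by
  have := r.mono
  have hinj := injective_fV_of_mono f
  intro e' u v he
  have hw (x : G.V) : r.left.fV (f.fV x) = r.right.fV (f.fV x) :=
    congrFun (congrArg SGraphHom.fV r.w) x
  have hk : edgeHom e' ≫ r.left = edgeHom e' ≫ r.right := by
    refine hom_ext_of_fV (funext fun b => ?_)
    cases b <;> simp only [SGraph_comp_fV, Function.comp, edgeHom, he] <;> exact hw _
  obtain ⟨m, hm⟩ := r.lift' (edgeHom e') hk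
  have hmV (b : Bool) : f.fV (m.fV b) = (edgeHom e').fV b :=
    congrFun (congrArg SGraphHom.fV hm) b
  refine ⟨m.fE (), congrFun (congrArg SGraphHom.fE hm) (), ?_⟩
  rw [m.comm ()]
  change (m.fV true, m.fV false) = (u, v)
  refine Prod.ext (hinj ?_) (hinj ?_)
  · simpa [edgeHom, he] using hmV true
  · simpa [edgeHom, he] using hmV false

lemma exists_comp_eq_of_forall_mem_range {f : G ⟶ H} (hf : EdgeReflecting f) (k : K ⟶ H)
    (hk : ∀ x, k.fV x ∈ Set.range f.fV) : ∃ l : K ⟶ G, l ≫ f = k := by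
  choose lV hlV using hk
  have hE (a : K.E) : ∃ e, f.fE e = k.fE a ∧ G.ι e = (lV (K.ι a).1, lV (K.ι a).2) :=
    hf _ _ _ (by rw [k.comm, hlV, hlV])
  choose lE hlE using hE
  exact ⟨⟨lV, lE, fun a => (hlE a).2⟩, hom_ext_of_fV (funext hlV)⟩

def labelled (H : SGraph) (L : Type) : SGraph where
  V := H.V × L
  E := H.E × L × L
  ι x := (((H.ι x.1).1, x.2.1), ((H.ι x.1).2, x.2.2))
  inj := by
    rintro ⟨e, p, q⟩ ⟨e', p', q'⟩ hx
    simp only [Prod.mk.injEq] at hx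
    obtain ⟨⟨h1, rfl⟩, h2, rfl⟩ := hx
    rw [H.inj (Prod.ext h1 h2)]

def labelHom {L : Type} (c : H.V → L) : H ⟶ H.labelled L :=
  ⟨fun x => (x, c x), fun e => (e, c (H.ι e).1, c (H.ι e).2), fun _ => rfl⟩

lemma comp_labelHom_eq_iff {L : Type} (k : K ⟶ H) (c c' : H.V → L) :
    k ≫ labelHom c = k ≫ labelHom c' ↔ ∀ x, c (k.fV x) = c' (k.fV x) := by
  constructor
  · intro h x
    exact congrArg Prod.snd (congrFun (congrArg SGraphHom.fV h) x)
  · intro h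
    exact hom_ext_of_fV (funext fun x => Prod.ext rfl (h x))

noncomputable def regularMono_of_edgeReflecting (f : G ⟶ H) [Mono f] (hf : EdgeReflecting f) :
    RegularMono f where
  Z := H.labelled Prop
  left := labelHom fun _ => True
  right := labelHom fun x => x ∈ Set.range f.fV
  w := (comp_labelHom_eq_iff f _ _).mpr fun x => (eq_true ⟨x, rfl⟩).symm
  isLimit := Fork.IsLimit.mk' _ fun s =>
    have hs := (comp_labelHom_eq_iff s.ι _ _).mp s.condition
    have hl := exists_comp_eq_of_forall_mem_range hf s.ι fun x => of_eq_true (hs x).symm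
    ⟨hl.choose, hl.choose_spec, fun hm => (cancel_mono f).mp (hm.trans hl.choose_spec.symm)⟩

end SGraph

/-- In the category `SGraph`, a monomorphism is a regular monomorphism if and
only if it is edge-reflecting. -/
theorem stmt_14 {G H : SGraph} (f : G ⟶ H) [Mono f] :
    Nonempty (RegularMono f) ↔
      (∀ (e' : H.E) (u v : G.V), H.ι e' = (f.fV u, f.fV v) →
        ∃ e : G.E, f.fE e = e' ∧ G.ι e = (u, v)) :=
  ⟨fun ⟨r⟩ => SGraph.edgeReflecting_of_regularMono r,
    fun hf => ⟨SGraph.regularMono_of_edgeReflecting f hf⟩⟩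
end

section
/- Every morphism in the category SGraph of directed simple graphs factors as an epimorphism followed by a regular (edge-reflecting) monomorphism, and this factorization is unique up to isomorphism. Concretely, given f = (f_V, f_E) : S → S', factor f_V = m_V ∘ e_V in Set as epi-mono, and pull back ι' along Δ(m_V) = m_V × m_V to obtain the intermediate simple graph; the resulting factorization is epi followed by regular mono. -/
open CategoryTheory Limits

/-!
Since incidence maps are injective, a morphism of simple graphs is determined by its vertex map.
Hence epimorphisms are the morphisms that are surjective on vertices, and testing against the
complete graph with loops on `Prop` shows that every induced subgraph inclusion is the equalizer
of the characteristic maps of its vertex set and of the whole vertex set. The image of `f` is the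
subgraph of `H` induced on `range f.fV`. For uniqueness, a regular monomorphism `m'` is injective
on vertices and reflects edges (lift the one-edge graph through the equalizer), so the comparison
map from its domain to the induced subgraph on `range m'.fV` is bijective on vertices and edges.
-/

namespace SGraph

open Function Set

@[ext]
lemma hom_ext {A B : SGraph} {u v : A ⟶ B} (h : u.fV = v.fV) : u = v :=
  SGraphHom.ext h <| funext fun k => B.inj <| by rw [u.comm, v.comm, h]

lemma fE_injective_of_fV_injective {A B : SGraph} (f : A ⟶ B) (hV : Injective f.fV) :
    Injective f.fE := fun a b hab => A.inj <| by
  have h := f.comm a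
  rw [hab, f.comm b, Prod.mk.injEq] at h
  exact Prod.ext (hV h.1.symm) (hV h.2.symm)

lemma isIso_of_bijective_fV_of_surjective_fE {A B : SGraph} (f : A ⟶ B) (hV : Bijective f.fV)
    (hE : Surjective f.fE) : IsIso f := by
  let eV := Equiv.ofBijective f.fV hV
  let eE := Equiv.ofBijective f.fE ⟨fE_injective_of_fV_injective f hV.1, hE⟩
  let g : B ⟶ A := ⟨eV.symm, eE.symm, fun k => by
    obtain ⟨k, rfl⟩ := eE.surjective k
    change A.ι (eE.symm (eE k)) = (eV.symm (B.ι (f.fE k)).1, eV.symm (B.ι (f.fE k)).2)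
    rw [f.comm, eE.symm_apply_apply]
    exact Prod.ext (eV.symm_apply_apply _).symm (eV.symm_apply_apply _).symm⟩
  exact ⟨g, hom_ext (funext eV.symm_apply_apply), hom_ext (funext eV.apply_symm_apply)⟩

def point : SGraph := ⟨PUnit, PEmpty, PEmpty.elim, fun e => e.elim⟩

def pointHom (A : SGraph) (a : A.V) : point ⟶ A := ⟨fun _ => a, PEmpty.elim, fun e => e.elim⟩

def arrow : SGraph := ⟨Bool, PUnit, fun _ => (false, true), fun _ _ _ => rfl⟩

def arrowHom (A : SGraph) (k : A.E) : arrow ⟶ A :=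
  ⟨fun v => cond v (A.ι k).2 (A.ι k).1, fun _ => k, fun _ => rfl⟩

def classifier : SGraph := ⟨Prop, Prop × Prop, id, injective_id⟩

def chi (A : SGraph) (S : Set A.V) : A ⟶ classifier :=
  ⟨(· ∈ S), fun k => ((A.ι k).1 ∈ S, (A.ι k).2 ∈ S), fun _ => rfl⟩

lemma fV_injective_of_mono {A B : SGraph} (m : A ⟶ B) [Mono m] : Injective m.fV :=
  fun a b hab => congrFun (congrArg SGraphHom.fV
    ((cancel_mono m).mp (hom_ext (funext fun _ => hab) : pointHom A a ≫ m = pointHom A b ≫ m)))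
    PUnit.unit

lemma epi_iff_surjective_fV {A B : SGraph} (e : A ⟶ B) : Epi e ↔ Surjective e.fV := by
  refine ⟨fun _ => ?_, fun hs => ⟨fun u v huv => hom_ext <| funext fun x => ?_⟩⟩
  · have h : chi B univ = chi B (range e.fV) :=
      (cancel_epi e).mp <| hom_ext <| funext fun a => propext (iff_of_true trivial ⟨a, rfl⟩)
    intro x
    exact (congrFun (congrArg SGraphHom.fV h) x).mp trivial
  · obtain ⟨a, rfl⟩ := hs x
    exact congrFun (congrArg SGraphHom.fV huv) a

lemma mem_range_fE_of_regularMono {A B : SGraph} {m : A ⟶ B} (hm : RegularMono m) {k : B.E}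
    (h₁ : (B.ι k).1 ∈ range m.fV) (h₂ : (B.ι k).2 ∈ range m.fV) : k ∈ range m.fE := by
  have hw : arrowHom B k ≫ hm.left = arrowHom B k ≫ hm.right := by
    have hV (a : A.V) := congrFun (congrArg SGraphHom.fV hm.w) a
    refine hom_ext <| funext fun v => ?_
    obtain ⟨a, ha⟩ := h₁
    obtain ⟨b, hb⟩ := h₂
    cases v
    · exact (ha ▸ hV a : hm.left.fV (B.ι k).1 = hm.right.fV (B.ι k).1)
    · exact (hb ▸ hV b : hm.left.fV (B.ι k).2 = hm.right.fV (B.ι k).2)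
  obtain ⟨l, hl⟩ := Fork.IsLimit.lift' hm.isLimit _ hw
  exact ⟨l.fE PUnit.unit, congrFun (congrArg SGraphHom.fE hl) PUnit.unit⟩

def induce (G : SGraph) (S : Set G.V) : SGraph where
  V := S
  E := {k : G.E // (G.ι k).1 ∈ S ∧ (G.ι k).2 ∈ S}
  ι k := (⟨_, k.2.1⟩, ⟨_, k.2.2⟩)
  inj a b hab := Subtype.ext <| G.inj <| by
    simp only [Prod.mk.injEq, Subtype.mk.injEq] at hab
    exact Prod.ext hab.1 hab.2

def induceIncl (G : SGraph) (S : Set G.V) : G.induce S ⟶ G :=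
  ⟨Subtype.val, Subtype.val, fun _ => rfl⟩

def induceLift {X G : SGraph} {S : Set G.V} (u : X ⟶ G) (h : ∀ x, u.fV x ∈ S) :
    X ⟶ G.induce S :=
  ⟨fun x => ⟨u.fV x, h x⟩, fun k => ⟨u.fE k, by rw [u.comm]; exact ⟨h _, h _⟩⟩,
    fun k => by simp only [induce, u.comm]⟩

@[simp]
lemma induceLift_induceIncl {X G : SGraph} {S : Set G.V} (u : X ⟶ G) (h : ∀ x, u.fV x ∈ S) :
    induceLift u h ≫ G.induceIncl S = u :=
  rfl

def induceInclRegularMono (G : SGraph) (S : Set G.V) : RegularMono (G.induceIncl S) where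
  Z := classifier
  left := chi G univ
  right := chi G S
  w := hom_ext <| funext fun x => propext (iff_of_true trivial x.2)
  isLimit := Fork.IsLimit.mk _
    (fun s => induceLift s.ι fun x =>
      (congrFun (congrArg SGraphHom.fV s.condition) x).mp trivial)
    (fun _ => rfl)
    (fun _ _ hl => hom_ext <| funext fun x => Subtype.ext <| congrFun (congrArg SGraphHom.fV hl) x)

lemma isIso_induceLift_of_regularMono {A B : SGraph} {m : A ⟶ B} (hm : RegularMono m)
    {S : Set B.V} (h : ∀ x, m.fV x ∈ S) (hS : S ⊆ range m.fV) : IsIso (induceLift m h) := by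
  have := hm.mono
  refine isIso_of_bijective_fV_of_surjective_fE _
    ⟨fun x y hxy => fV_injective_of_mono m (congrArg Subtype.val hxy), ?_⟩ ?_
  · rintro ⟨v, hv⟩
    obtain ⟨x, rfl⟩ := hS hv
    exact ⟨x, rfl⟩
  · rintro ⟨k, h₁, h₂⟩
    obtain ⟨l, rfl⟩ := mem_range_fE_of_regularMono hm (hS h₁) (hS h₂)
    exact ⟨l, rfl⟩

end SGraph

/-- Every morphism in `SGraph` factors as an epimorphism followed by a regular
monomorphism, uniquely up to isomorphism. -/
theorem stmt_15 {G H : SGraph} (f : G ⟶ H) :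
    ∃ (K : SGraph) (e : G ⟶ K) (m : K ⟶ H),
      Epi e ∧ Nonempty (RegularMono m) ∧ e ≫ m = f ∧
      ∀ (K' : SGraph) (e' : G ⟶ K') (m' : K' ⟶ H),
        Epi e' → Nonempty (RegularMono m') → e' ≫ m' = f →
        ∃ i : K ≅ K', e ≫ i.hom = e' ∧ i.hom ≫ m' = m := by
  refine ⟨H.induce (Set.range f.fV), SGraph.induceLift f fun a => ⟨a, rfl⟩, H.induceIncl _,
    (SGraph.epi_iff_surjective_fV _).mpr ?_, ⟨H.induceInclRegularMono _⟩,
    SGraph.induceLift_induceIncl _ _, ?_⟩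
  · rintro ⟨_, a, rfl⟩
    exact ⟨a, rfl⟩
  rintro K' e' m' he' ⟨hm'⟩ rfl
  have hsurj := (SGraph.epi_iff_surjective_fV e').mp he'
  have hrange (x : K'.V) : m'.fV x ∈ Set.range (e' ≫ m').fV := by
    obtain ⟨a, rfl⟩ := hsurj x
    exact ⟨a, rfl⟩
  have := SGraph.isIso_induceLift_of_regularMono hm' hrange fun _ ⟨a, ha⟩ => ⟨e'.fV a, ha⟩
  refine ⟨(asIso (SGraph.induceLift m' hrange)).symm, ?_, ?_⟩
  · exact (Iso.comp_inv_eq _).mpr rfl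
  · exact (Iso.inv_comp_eq _).mpr (SGraph.induceLift_induceIncl _ _).symm
end

section
/- Multi-sum existence via epi-regular mono factorization: let C be a category with binary coproducts and (epi, regular mono)-factorizations in which regular monomorphisms are closed under the decomposition property (g∘f regular mono, g regular mono ⟹ f regular mono). Then for any cospan of regular monomorphisms a : A → Z ← B : b, factoring the induced morphism [a,b] : A + B → Z as an epimorphism e : A + B → Y followed by a regular monomorphism m : Y → Z yields a cospan (e ∘ in_A : A → Y, e ∘ in_B : B → Y) of regular monomorphisms together with the regular mono m : Y → Z satisfying a = m ∘ (e ∘ in_A) and b = m ∘ (e ∘ in_B). -/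
open CategoryTheory Limits

theorem stmt_17_general {C : Type*} [Category C] [HasBinaryCoproducts C]
    (hdec : ∀ {X Y Z : C} (f : X ⟶ Y) (m : Y ⟶ Z),
      Nonempty (RegularMono (f ≫ m)) → Nonempty (RegularMono m) →
      Nonempty (RegularMono f))
    {A B Z : C} (a : A ⟶ Z) (b : B ⟶ Z)
    (ha : Nonempty (RegularMono a)) (hb : Nonempty (RegularMono b))
    {Y : C} (e : A ⨿ B ⟶ Y) (m : Y ⟶ Z)
    (hm : Nonempty (RegularMono m))
    (hfac : e ≫ m = coprod.desc a b) :
    Nonempty (RegularMono (coprod.inl ≫ e)) ∧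
    Nonempty (RegularMono (coprod.inr ≫ e)) ∧
    (coprod.inl ≫ e) ≫ m = a ∧ (coprod.inr ≫ e) ≫ m = b := by
  have hinl : (coprod.inl ≫ e) ≫ m = a := by rw [Category.assoc, hfac, coprod.inl_desc]
  have hinr : (coprod.inr ≫ e) ≫ m = b := by rw [Category.assoc, hfac, coprod.inr_desc]
  exact ⟨hdec _ m (hinl ▸ ha) hm, hdec _ m (hinr ▸ hb) hm, hinl, hinr⟩

/-- Multi-sum existence via (epi, regular mono)-factorization: for a cospan of
regular monos `a : A → Z ← B : b`, factoring `[a,b] : A + B → Z` as an epi `e`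
followed by a regular mono `m` yields a cospan of regular monos
`(in_A ≫ e, in_B ≫ e)` into the factorization object, through which `(a, b)`
factors via the regular mono `m`. -/
theorem stmt_17 {C : Type*} [Category C] [HasBinaryCoproducts C]
    (hfact : ∀ {X Y : C} (f : X ⟶ Y), ∃ (Z : C) (e : X ⟶ Z) (m : Z ⟶ Y),
      Epi e ∧ Nonempty (RegularMono m) ∧ e ≫ m = f)
    (hdec : ∀ {X Y Z : C} (f : X ⟶ Y) (m : Y ⟶ Z),
      Nonempty (RegularMono (f ≫ m)) → Nonempty (RegularMono m) →
      Nonempty (RegularMono f))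
    {A B Z : C} (a : A ⟶ Z) (b : B ⟶ Z)
    (ha : Nonempty (RegularMono a)) (hb : Nonempty (RegularMono b))
    {Y : C} (e : A ⨿ B ⟶ Y) (m : Y ⟶ Z)
    (he : Epi e) (hm : Nonempty (RegularMono m))
    (hfac : e ≫ m = coprod.desc a b) :
    Nonempty (RegularMono (coprod.inl ≫ e)) ∧
    Nonempty (RegularMono (coprod.inr ≫ e)) ∧
    (coprod.inl ≫ e) ≫ m = a ∧ (coprod.inr ≫ e) ≫ m = b :=
  stmt_17_general hdec a b ha hb e m hm hfac
end

section
/- Universal property of the M-multi-pushout-complement: let C be an M-adhesive category (M a stable system of monics, pushouts along M-morphisms exist, are pullbacks, and are pullback-stable), with morphisms f : A → B and b : B → D, b ∈ M. Suppose given a pushout square along an M-morphism n : A → E of (f composed appropriately), i.e., a pushout (1)+(2) of (f, n) with n ∈ M yielding cospan into an object C, and suppose the M-morphism m : B → C from the pushout factors as m = m' ∘ b with m', b ∈ M. Then there exists a pair (a : A → P, d : P → D) with a ∈ M such that (d, b) is a pushout of (a, f), together with an M-morphism p : P → E making the diagram commute and such that the square (P, E, D, C) is a pushout; moreover (a, d)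 is unique up to isomorphism among such pairs. -/
/-!
A pushout `(p, d, q, m')` along the `M`-morphism `p` is a pullback, so any complement `P` is
forced to be the pullback of `q` along `m'`, which gives uniqueness. For existence, take
`P := pullback q m'` and `a := ⟨n, f ≫ b⟩`. Pulling the pushout `(f, n, m, q)` back along `m'`
gives a cube with top face `(f, a, b, d)`, whose side faces are pullbacks because `m'` and `p`
are monos and `m = b ≫ m'`; stability of pushouts along `M` then makes `(f, a, b, d)` a
pushout, and pushout cancellation makes `(d, p, m', q)` one too.
-/

open CategoryTheory Limits

section

variable {C : Type*} [Category C]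

theorem CategoryTheory.IsPullback.comp_id_of_mono {X Y Z : C} (u : X ⟶ Y) (g : Y ⟶ Z) [Mono g] :
    IsPullback u (𝟙 X) g (u ≫ g) :=
  .of_vert_isIso_mono ⟨by simp⟩

theorem IsStablePushout.isPushout_of_pullback_of_factor {A B D E X P : C}
    {f : A ⟶ B} {n : A ⟶ E} {m : B ⟶ X} {q : E ⟶ X} (hs : IsStablePushout f n m q)
    {b : B ⟶ D} {m' : D ⟶ X} [Mono m'] (hfac : m = b ≫ m')
    {p : P ⟶ E} {d : P ⟶ D} (hP : IsPullback p d q m')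
    {a : A ⟶ P} (hap : a ≫ p = n) :
    IsPushout f a b d ∧ IsPushout d p m' q := by
  have : Mono p := hP.mono_fst_of_mono
  have hpo₁ : IsPushout f a b d :=
    hs.2 f a b d (𝟙 A) (𝟙 B) p m' .of_id_snd (hap ▸ .comp_id_of_mono a p)
      (hfac ▸ .comp_id_of_mono b m') hP.flip
  refine ⟨hpo₁, .of_top ?_ hP.w.symm hpo₁⟩
  simpa only [hap, ← hfac] using hs.1

theorem CategoryTheory.IsPullback.exists_iso_comp_eq {A P P' Y Z W : C}
    {p : P ⟶ Y} {d : P ⟶ Z} {p' : P' ⟶ Y} {d' : P' ⟶ Z} {q : Y ⟶ W} {m : Z ⟶ W}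
    (h : IsPullback p d q m) (h' : IsPullback p' d' q m) {a : A ⟶ P} {a' : A ⟶ P'}
    (hp : a ≫ p = a' ≫ p') (hd : a ≫ d = a' ≫ d') :
    ∃ δ : P ≅ P', a ≫ δ.hom = a' ∧ δ.hom ≫ d' = d :=
  ⟨h.isoIsPullback _ _ h', h'.hom_ext (by simpa using hp) (by simpa using hd), by simp⟩

end

theorem stmt_19_general {C : Type*} [Category C] [HasPullbacks C]
    (M : MorphismProperty C)
    (hM_mono : ∀ {X Y : C} (f : X ⟶ Y), M f → Mono f)
    (hM_pb : ∀ {P X Y Z : C} (fst : P ⟶ X) (snd : P ⟶ Y) (h : X ⟶ Z) (k : Y ⟶ Z),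
      IsPullback fst snd h k → M k → M fst)
    (hM_po_pb : ∀ {A B X D : C} (f : A ⟶ B) (g : A ⟶ X) (h : B ⟶ D) (k : X ⟶ D),
      IsPushout f g h k → M g → IsPullback f g h k)
    (hM_po_stable : ∀ {A B X D : C} (f : A ⟶ B) (g : A ⟶ X) (h : B ⟶ D) (k : X ⟶ D),
      IsPushout f g h k → M g → IsStablePushout f g h k)
    {A B D E X : C} (f : A ⟶ B) (b : B ⟶ D)
    (n : A ⟶ E) (hn : M n) (m : B ⟶ X) (q : E ⟶ X)
    (hpo : IsPushout f n m q)
    (m' : D ⟶ X) (hm' : M m') (hfac : m = b ≫ m') :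
    ∃ (P : C) (a : A ⟶ P) (d : P ⟶ D) (p : P ⟶ E),
      M a ∧ M p ∧ IsPushout a f d b ∧ IsPushout p d q m' ∧ a ≫ p = n ∧
      ∀ (P' : C) (a' : A ⟶ P') (d' : P' ⟶ D) (p' : P' ⟶ E),
        M a' → M p' → IsPushout a' f d' b → IsPushout p' d' q m' → a' ≫ p' = n →
        ∃ δ : P ≅ P', a ≫ δ.hom = a' ∧ δ.hom ≫ d' = d := by
  have : Mono m' := hM_mono m' hm'
  have hP := IsPullback.of_hasPullback q m'
  have : Mono (pullback.fst q m') := hP.mono_fst_of_mono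
  let a : A ⟶ pullback q m' := pullback.lift n (f ≫ b) (by rw [Category.assoc, ← hfac, hpo.w])
  have hap : a ≫ pullback.fst q m' = n := pullback.lift_fst _ _ _
  have had : a ≫ pullback.snd q m' = f ≫ b := pullback.lift_snd _ _ _
  obtain ⟨hpo₁, hpo₂⟩ :=
    (hM_po_stable f n m q hpo hn).isPushout_of_pullback_of_factor hfac hP hap
  have hMa : M a := hM_pb _ _ _ _ (hap ▸ IsPullback.comp_id_of_mono a _) hn
  refine ⟨_, a, _, _, hMa, hM_pb _ _ _ _ hP hm', hpo₁.flip, hpo₂.flip, hap, ?_⟩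
  intro P' a' d' p' _ hMp' hpo₁' hpo₂' hap'
  exact hP.exists_iso_comp_eq (hM_po_pb d' p' m' q hpo₂'.flip hMp').flip
    (hap.trans hap'.symm) (had.trans hpo₁'.w.symm)

/-- Universal property of the `M`-multi-pushout-complement in an `M`-adhesive
category: given `f : A ⟶ B`, `b : B ⟶ D` with `b ∈ M`, a pushout `(m, q)` of
`(f, n)` along an `M`-morphism `n : A ⟶ E`, and a factorization `m = m' ∘ b`
with `m' ∈ M`, there is an element `(a : A ⟶ P, d : P ⟶ D)` of the multi-POC
of `(f, b)` (i.e. `a ∈ M` and `(d, b)` is a pushout of `(a, f)`) together with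
an `M`-morphism `p : P ⟶ E` making the diagram commute such that the square
`(P, E, D, C)` is a pushout; moreover `(a, d)` is unique up to isomorphism. -/
theorem stmt_19 {C : Type*} [Category C] [HasPullbacks C]
    (M : MorphismProperty C)
    (hM_mono : ∀ {X Y : C} (f : X ⟶ Y), M f → Mono f)
    (hM_iso : ∀ {X Y : C} (f : X ⟶ Y), IsIso f → M f)
    (hM_comp : ∀ {X Y Z : C} (f : X ⟶ Y) (g : Y ⟶ Z), M f → M g → M (f ≫ g))
    (hM_pb : ∀ {P X Y Z : C} (fst : P ⟶ X) (snd : P ⟶ Y) (h : X ⟶ Z) (k : Y ⟶ Z),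
      IsPullback fst snd h k → M k → M fst)
    (hM_po : ∀ {A B X D : C} (f : A ⟶ B) (g : A ⟶ X) (h : B ⟶ D) (k : X ⟶ D),
      IsPushout f g h k → M g → M h)
    (hM_po_pb : ∀ {A B X D : C} (f : A ⟶ B) (g : A ⟶ X) (h : B ⟶ D) (k : X ⟶ D),
      IsPushout f g h k → M g → IsPullback f g h k)
    (hM_po_stable : ∀ {A B X D : C} (f : A ⟶ B) (g : A ⟶ X) (h : B ⟶ D) (k : X ⟶ D),
      IsPushout f g h k → M g → IsStablePushout f g h k)
    {A B D E X : C} (f : A ⟶ B) (b : B ⟶ D) (hb : M b)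
    (n : A ⟶ E) (hn : M n) (m : B ⟶ X) (q : E ⟶ X)
    (hpo : IsPushout f n m q)
    (m' : D ⟶ X) (hm' : M m') (hfac : m = b ≫ m') :
    ∃ (P : C) (a : A ⟶ P) (d : P ⟶ D) (p : P ⟶ E),
      M a ∧ M p ∧ IsPushout a f d b ∧ IsPushout p d q m' ∧ a ≫ p = n ∧
      ∀ (P' : C) (a' : A ⟶ P') (d' : P' ⟶ D) (p' : P' ⟶ E),
        M a' → M p' → IsPushout a' f d' b → IsPushout p' d' q m' → a' ≫ p' = n →
        ∃ δ : P ≅ P', a ≫ δ.hom = a' ∧ δ.hom ≫ d' = d :=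
  stmt_19_general M hM_mono hM_pb hM_po_pb hM_po_stable f b n hn m q hpo m' hm' hfac
end
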